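/- Suppose the bases {a_i}_{i=1}^d and {b_i}_{i=1}^d are mutually unbiased, i.e., |⟨a_i, b_j⟩|² = 1/d for all i, j. Then for every orthonormal basis {a'_i}_{i=1}^d of H, the trade-off ε(𝒜,𝒜') + η(𝒜',ℬ) ≥ 1 − 1/d holds; moreover η(𝒜,ℬ) = 1 − 1/d, so equality is attained when a'_i = a_i for all i. -/

import Mathlib

/-!
Every trace in the definitions is a Born probability `p_ρ(v) = ⟨v, ρ v⟩`, and along an
orthonormal basis these form a probability vector. For bases with `|⟨a_i, b_j⟩|² = c` the
disturbance of `𝒜` at `b_i` is therefore `p_ρ(b_i) - c`, of modulus at most `1 - c` when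
`c ≤ 1/2`, with equality at `ρ = |b_i⟩⟨b_i|`. For an arbitrary `𝒜'`, the same state with
`p_j = |⟨b_i, a'_j⟩|²` has error at least `max p - c` and disturbance at least
`1 - ∑ p_j² ≥ 1 - max p`.
-/

open scoped ComplexInnerProductSpace

noncomputable section

variable {H : Type*} [NormedAddCommGroup H] [InnerProductSpace ℂ H] [FiniteDimensional ℂ H]
variable {ι ι' : Type*} [Fintype ι] [Fintype ι']

/-- The rank-one projector `|v⟩⟨v|`. -/
def ketbra (v : H) : H →ₗ[ℂ] H where
  toFun x := ⟪v, x⟫ • v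
  map_add' x y := by simp [inner_add_right, add_smul]
  map_smul' c x := by simp [inner_smul_right, mul_smul]

/-- A density operator: self-adjoint, positive semidefinite, trace one. -/
def IsDensity (ρ : H →ₗ[ℂ] H) : Prop :=
  LinearMap.IsSymmetric ρ ∧ (∀ x : H, 0 ≤ (⟪x, ρ x⟫).re) ∧
    LinearMap.trace ℂ H ρ = 1

/-- The state-dependent error `ε_ρ(𝒜,𝒜')`. -/
def sdError (a a' : ι → H) (ρ : H →ₗ[ℂ] H) : ℝ :=
  ⨆ i : ι, ‖LinearMap.trace ℂ H (ρ ∘ₗ (ketbra (a i) - ketbra (a' i)))‖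

/-- The state-independent error `ε(𝒜,𝒜')`. -/
def siError (a a' : ι → H) : ℝ :=
  ⨆ ρ : {ρ : H →ₗ[ℂ] H // IsDensity ρ}, sdError a a' ρ.1

/-- The operator `|b_i⟩⟨b_i| − Σ_j |⟨a'_j, b_i⟩|² |a'_j⟩⟨a'_j|`. -/
def distOp (a' : ι' → H) (b : ι → H) (i : ι) : H →ₗ[ℂ] H :=
  ketbra (b i) - ∑ j : ι', (‖⟪a' j, b i⟫‖ ^ 2 : ℂ) • ketbra (a' j)

/-- The state-dependent disturbance `η_ρ(𝒜',ℬ)`. -/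
def sdDist (a' : ι' → H) (b : ι → H) (ρ : H →ₗ[ℂ] H) : ℝ :=
  ⨆ i : ι, ‖LinearMap.trace ℂ H (ρ ∘ₗ distOp a' b i)‖

/-- The state-independent disturbance `η(𝒜',ℬ)`. -/
def siDist (a' : ι' → H) (b : ι → H) : ℝ :=
  ⨆ ρ : {ρ : H →ₗ[ℂ] H // IsDensity ρ}, sdDist a' b ρ.1

/-- The state-independent overall error `Δ(𝒜,𝒜',ℬ)`. -/
def siOverall (a a' b : ι → H) : ℝ :=
  ⨆ ρ : {ρ : H →ₗ[ℂ] H // IsDensity ρ}, (sdError a a' ρ.1 + sdDist a' b ρ.1)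

set_option linter.unusedSectionVars false

lemma ketbra_apply (v x : H) : ketbra v x = ⟪v, x⟫ • v := rfl

lemma trace_comp_ketbra (ρ : H →ₗ[ℂ] H) (v : H) :
    LinearMap.trace ℂ H (ρ ∘ₗ ketbra v) = ⟪v, ρ v⟫ := by
  rw [LinearMap.trace_eq_sum_inner _ (stdOrthonormalBasis ℂ H)]
  simp only [LinearMap.comp_apply, ketbra_apply, map_smul, inner_smul_right]
  exact (stdOrthonormalBasis ℂ H).sum_inner_mul_inner v (ρ v)

/-- The Born probability `tr(ρ |v⟩⟨v|)` of the outcome `v` in the state `ρ`. -/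
def bornProb (ρ : H →ₗ[ℂ] H) (v : H) : ℝ := (⟪v, ρ v⟫).re

lemma bornProb_ketbra (v x : H) : bornProb (ketbra v) x = ‖⟪v, x⟫‖ ^ 2 := by
  rw [bornProb, ketbra_apply, inner_smul_right, ← inner_conj_symm, RCLike.conj_mul,
    RCLike.norm_conj]
  norm_cast

lemma isDensity_ketbra {v : H} (hv : ‖v‖ = 1) : IsDensity (ketbra v) := by
  refine ⟨fun x y => ?_, fun x => ?_, ?_⟩
  · simp only [ketbra_apply, inner_smul_left, inner_smul_right, inner_conj_symm]
    ring
  · exact (bornProb_ketbra v x).trans_ge (sq_nonneg _)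
  · rw [← LinearMap.id_comp (ketbra v), trace_comp_ketbra, LinearMap.id_apply,
      inner_self_eq_norm_sq_to_K, hv]
    simp

lemma bornProb_ketbra_self {v : H} (hv : ‖v‖ = 1) : bornProb (ketbra v) v = 1 := by
  rw [bornProb_ketbra, inner_self_eq_norm_sq_to_K, hv]
  simp

namespace IsDensity

variable {ρ : H →ₗ[ℂ] H}

lemma ofReal_bornProb (hρ : IsDensity ρ) (v : H) : (bornProb ρ v : ℂ) = ⟪v, ρ v⟫ :=
  Complex.conj_eq_iff_re.mp ((inner_conj_symm (ρ v) v).trans (hρ.1 v v))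

lemma bornProb_nonneg (hρ : IsDensity ρ) (v : H) : 0 ≤ bornProb ρ v := hρ.2.1 v

lemma sum_bornProb (hρ : IsDensity ρ) (u : OrthonormalBasis ι ℂ H) :
    ∑ i, bornProb ρ (u i) = 1 := by
  have h := congrArg Complex.re hρ.2.2
  rwa [LinearMap.trace_eq_sum_inner ρ u, Complex.re_sum] at h

lemma bornProb_le_one (hρ : IsDensity ρ) (u : OrthonormalBasis ι ℂ H) (k : ι) :
    bornProb ρ (u k) ≤ 1 :=
  hρ.sum_bornProb u ▸ Finset.single_le_sum (fun i _ => hρ.bornProb_nonneg (u i))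
    (Finset.mem_univ k)

lemma sdError_eq (hρ : IsDensity ρ) (a a' : ι → H) :
    sdError a a' ρ = ⨆ i, |bornProb ρ (a i) - bornProb ρ (a' i)| := by
  refine iSup_congr fun i => ?_
  rw [LinearMap.comp_sub, map_sub, trace_comp_ketbra, trace_comp_ketbra,
    ← hρ.ofReal_bornProb, ← hρ.ofReal_bornProb, ← Complex.ofReal_sub, Complex.norm_real,
    Real.norm_eq_abs]

lemma sdDist_eq (hρ : IsDensity ρ) (a' : ι' → H) (b : ι → H) :
    sdDist a' b ρ =
      ⨆ i, |bornProb ρ (b i) - ∑ j, ‖⟪a' j, b i⟫‖ ^ 2 * bornProb ρ (a' j)| := by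
  refine iSup_congr fun i => ?_
  have h : ρ ∘ₗ distOp a' b i
      = ρ ∘ₗ ketbra (b i) - ∑ j, (‖⟪a' j, b i⟫‖ ^ 2 : ℂ) • (ρ ∘ₗ ketbra (a' j)) := by
    ext z
    simp [distOp, map_sum]
  rw [h, map_sub, map_sum]
  simp only [map_smul, smul_eq_mul, trace_comp_ketbra, ← hρ.ofReal_bornProb]
  norm_cast

lemma sdError_le_one (hρ : IsDensity ρ) (a a' : OrthonormalBasis ι ℂ H) :
    sdError a a' ρ ≤ 1 := by
  rw [hρ.sdError_eq]
  exact Real.iSup_le (fun i => abs_sub_le_of_nonneg_of_le (hρ.bornProb_nonneg _)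
    (hρ.bornProb_le_one a i) (hρ.bornProb_nonneg _) (hρ.bornProb_le_one a' i)) zero_le_one

lemma sdDist_le_one (hρ : IsDensity ρ) (a' : OrthonormalBasis ι' ℂ H)
    (b : OrthonormalBasis ι ℂ H) : sdDist a' b ρ ≤ 1 := by
  rw [hρ.sdDist_eq]
  refine Real.iSup_le (fun i => abs_sub_le_of_nonneg_of_le (hρ.bornProb_nonneg _)
    (hρ.bornProb_le_one b i) (Finset.sum_nonneg fun j _ =>
      mul_nonneg (sq_nonneg _) (hρ.bornProb_nonneg _)) ?_) zero_le_one
  calc ∑ j, ‖⟪a' j, b i⟫‖ ^ 2 * bornProb ρ (a' j)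
      ≤ ∑ j, ‖⟪a' j, b i⟫‖ ^ 2 :=
        Finset.sum_le_sum fun j _ => mul_le_of_le_one_right (by positivity)
          (hρ.bornProb_le_one a' j)
    _ = 1 := by rw [a'.sum_sq_norm_inner_right, b.orthonormal.1 i, one_pow]

lemma sdError_le_siError (hρ : IsDensity ρ) (a a' : OrthonormalBasis ι ℂ H) :
    sdError a a' ρ ≤ siError a a' :=
  le_ciSup (f := fun σ : {σ : H →ₗ[ℂ] H // IsDensity σ} => sdError a a' σ.1)
    ⟨1, Set.forall_mem_range.2 fun σ => σ.2.sdError_le_one a a'⟩ ⟨ρ, hρ⟩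

lemma sdDist_le_siDist (hρ : IsDensity ρ) (a' : OrthonormalBasis ι' ℂ H)
    (b : OrthonormalBasis ι ℂ H) : sdDist a' b ρ ≤ siDist a' b :=
  le_ciSup (f := fun σ : {σ : H →ₗ[ℂ] H // IsDensity σ} => sdDist a' b σ.1)
    ⟨1, Set.forall_mem_range.2 fun σ => σ.2.sdDist_le_one a' b⟩ ⟨ρ, hρ⟩

end IsDensity

lemma siError_self (a : ι → H) : siError a a = 0 := by
  simp [siError, sdError]

section Unbiased

variable {a b : OrthonormalBasis ι ℂ H} {c : ℝ}

lemma IsDensity.sdDist_eq_of_unbiased {ρ : H →ₗ[ℂ] H} (hρ : IsDensity ρ)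
    (hab : ∀ i j, ‖⟪a i, b j⟫‖ ^ 2 = c) : sdDist a b ρ = ⨆ i, |bornProb ρ (b i) - c| := by
  simp only [hρ.sdDist_eq, hab, ← Finset.mul_sum, hρ.sum_bornProb, mul_one]

lemma siDist_eq_of_unbiased [Nonempty ι] (hab : ∀ i j, ‖⟪a i, b j⟫‖ ^ 2 = c) (hc : c ≤ 1 / 2) :
    siDist a b = 1 - c := by
  refine le_antisymm (Real.iSup_le (fun ρ => ?_) (by linarith)) ?_
  · rw [ρ.2.sdDist_eq_of_unbiased hab]
    refine Real.iSup_le (fun i => abs_le.2 ⟨?_, ?_⟩) (by linarith)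
    · linarith [ρ.2.bornProb_nonneg (b i)]
    · linarith [ρ.2.bornProb_le_one b i]
  · obtain ⟨k⟩ := ‹Nonempty ι›
    have hρ := isDensity_ketbra (b.orthonormal.1 k)
    refine le_trans ?_ (hρ.sdDist_le_siDist a b)
    rw [hρ.sdDist_eq_of_unbiased hab]
    refine le_ciSup_of_le (Finite.bddAbove_range _) k ?_
    rw [bornProb_ketbra_self (b.orthonormal.1 k)]
    exact le_abs_self _

lemma one_sub_le_siError_add_siDist_eq_of_unbiased [Nonempty ι]
    (hab : ∀ i j, ‖⟪a i, b j⟫‖ ^ 2 = c) (a' : OrthonormalBasis ι ℂ H) :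
    1 - c ≤ siError a a' + siDist a' b := by
  obtain ⟨k⟩ := ‹Nonempty ι›
  have hρ := isDensity_ketbra (b.orthonormal.1 k)
  set p : ι → ℝ := fun j => ‖⟪b k, a' j⟫‖ ^ 2
  obtain ⟨j₀, -, hj₀⟩ := Finset.exists_max_image Finset.univ p Finset.univ_nonempty
  have hp : ∑ j, p j = 1 := by
    rw [a'.sum_sq_norm_inner_left, b.orthonormal.1 k, one_pow]
  have herr : p j₀ - c ≤ sdError a a' (ketbra (b k)) := by
    rw [hρ.sdError_eq]
    refine le_ciSup_of_le (Finite.bddAbove_range _) j₀ ?_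
    rw [bornProb_ketbra, bornProb_ketbra, norm_inner_symm, hab, abs_sub_comm]
    exact le_abs_self _
  have hdist : 1 - p j₀ ≤ sdDist a' b (ketbra (b k)) := by
    rw [hρ.sdDist_eq]
    refine le_ciSup_of_le (Finite.bddAbove_range _) k ?_
    simp only [bornProb_ketbra_self (b.orthonormal.1 k), bornProb_ketbra, norm_inner_symm (a' _)]
    calc 1 - p j₀ = 1 - ∑ j, p j₀ * p j := by rw [← Finset.mul_sum, hp, mul_one]
      _ ≤ 1 - ∑ j, p j * p j := by
          gcongr with j
          exact hj₀ j (Finset.mem_univ j)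
      _ ≤ _ := le_abs_self _
  linarith [hρ.sdError_le_siError a a', hρ.sdDist_le_siDist a' b]

end Unbiased

/-- trade-off for mutually unbiased bases in `d`-dimensional Hilbert space:
`ε(𝒜,𝒜') + η(𝒜',ℬ) ≥ 1 - 1/d`, with `η(𝒜,ℬ) = 1 - 1/d`, so equality holds at `𝒜' = 𝒜`. -/
theorem mub_tradeoff {d : ℕ} (hd : 2 ≤ d) (a b : OrthonormalBasis (Fin d) ℂ H)
    (hmub : ∀ i j : Fin d, ‖⟪a i, b j⟫‖ ^ 2 = 1 / (d : ℝ)) :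
    (∀ a' : OrthonormalBasis (Fin d) ℂ H,
        1 - 1 / (d : ℝ) ≤ siError (⇑a) (⇑a') + siDist (⇑a') (⇑b)) ∧
    siDist (⇑a) (⇑b) = 1 - 1 / (d : ℝ) ∧
    siError (⇑a) (⇑a) + siDist (⇑a) (⇑b) = 1 - 1 / (d : ℝ) := by
  have : Nonempty (Fin d) := ⟨⟨0, by omega⟩⟩
  have hdist := siDist_eq_of_unbiased hmub (one_div_le_one_div_of_le two_pos (by exact_mod_cast hd))
  refine ⟨one_sub_le_siError_add_siDist_eq_of_unbiased hmub, hdist, ?_⟩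
  rw [siError_self, hdist, zero_add]
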